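/- arXiv:0807.2658 — 2 statements merged into one kernel-verified Lean document; each statement's English description precedes it below -/
import Mathlib

section
/- Let ψ be the 4×4 rational matrix with rows (0, 0, 1/2, -1/2), (0, 0, -1, -1), (1, -1/2, 0, 0), (-1, -1/2, 0, 0). Define 8×8 matrices Ψ₁ = ψ ⊗̂ 1 and Ψ₂ = 1 ⊗̂ ψ as the block matrices given in the text: with respect to the ordered basis |000⟩,|011⟩,|101⟩,|110⟩,|001⟩,|010⟩,|100⟩,|111⟩, Ψ₁ has zero diagonal blocks and off-diagonal 4×4 blocks B (upper-right) and B (lower-left) where B has rows (0, 1/2, -1/2, 0), (1, 0, 0, -1/2), (-1, 0, 0, -1/2), (0, -1, -1, 0); Ψ₂ has zero diagonal blocks, upper-right block with rows (1/2, -1/2, 0, 0), (-1, -1, 0, 0), (0, 0, -1, 1/2), (0, 0, 1, 1/2), and lower-left block with rows (1, -1/2, 0, 0), (-1, -1/2, 0, 0), (0, 0, -1/2, 1/2), (0, 0, 1, 1). Then Ψ₁ Ψ₂ Ψ₁ = Ψ₂ Ψ₁ Ψ₂ (the Yang–Baxter equation). -/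
/-!
Both Ψ₁ and Ψ₂ are odd, i.e. block anti-diagonal, and a product of three odd block matrices is
again odd with blocks `A G A` and `A' E A'`. The braid relation therefore splits into the two
4 × 4 identities `B D B = C B C` and `B C B = D B D`, which are checked entrywise.
-/

namespace Matrix

variable {l m R : Type*} [Fintype l] [Fintype m] [Semiring R]

theorem fromBlocks_antidiag_mul_mul (A : Matrix l m R) (A' : Matrix m l R)
    (E : Matrix l m R) (G : Matrix m l R) :
    fromBlocks 0 A A' 0 * fromBlocks 0 E G 0 * fromBlocks 0 A A' 0 =
      fromBlocks 0 (A * G * A) (A' * E * A') 0 := by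
  simp only [fromBlocks_multiply, Matrix.mul_zero, Matrix.zero_mul, add_zero, zero_add]

theorem fromBlocks_antidiag_braid {A A' E G : Matrix l l R}
    (h₁ : A * G * A = E * A' * E) (h₂ : A' * E * A' = G * A * G) :
    fromBlocks 0 A A' 0 * fromBlocks 0 E G 0 * fromBlocks 0 A A' 0 =
      fromBlocks 0 E G 0 * fromBlocks 0 A A' 0 * fromBlocks 0 E G 0 := by
  rw [fromBlocks_antidiag_mul_mul, fromBlocks_antidiag_mul_mul, h₁, h₂]

end Matrix

theorem psi_yang_baxter :
    let B : Matrix (Fin 4) (Fin 4) ℚ :=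
      !![0, 1/2, -1/2, 0;
         1, 0, 0, -1/2;
         -1, 0, 0, -1/2;
         0, -1, -1, 0]
    let C : Matrix (Fin 4) (Fin 4) ℚ :=
      !![1/2, -1/2, 0, 0;
         -1, -1, 0, 0;
         0, 0, -1, 1/2;
         0, 0, 1, 1/2]
    let D : Matrix (Fin 4) (Fin 4) ℚ :=
      !![1, -1/2, 0, 0;
         -1, -1/2, 0, 0;
         0, 0, -1/2, 1/2;
         0, 0, 1, 1]
    let Ψ₁ : Matrix (Fin 4 ⊕ Fin 4) (Fin 4 ⊕ Fin 4) ℚ := Matrix.fromBlocks 0 B B 0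
    let Ψ₂ : Matrix (Fin 4 ⊕ Fin 4) (Fin 4 ⊕ Fin 4) ℚ := Matrix.fromBlocks 0 C D 0
    Ψ₁ * Ψ₂ * Ψ₁ = Ψ₂ * Ψ₁ * Ψ₂ := by
  intro B C D Ψ₁ Ψ₂
  apply Matrix.fromBlocks_antidiag_braid <;>
    norm_num [B, C, D, ← Matrix.ext_iff, Fin.forall_fin_succ, Matrix.mul_apply, Fin.sum_univ_succ]
end

section
/- Let R be a commutative ring and a₁, b₁, a₂, b₂, λ ∈ R. Consider the two-row Koszul factorization with differentials d₀ = [[a₁, b₂], [a₂, -b₁]] and d₁ = [[b₁, b₂], [a₂, -a₁]], and define new entries a₁' = a₁ - λa₂, b₁' = b₁, a₂' = a₂, b₂' = b₂ + λb₁, with corresponding differentials d₀' = [[a₁', b₂'], [a₂', -b₁']] and d₁' = [[b₁', b₂'], [a₂', -a₁']]. Set U₀ = Id (2×2) and U₁ = [[1, -λ], [0, 1]]. Then U₁ · d₀ = d₀' · U₀ and U₀ · d₁ = d₁' · U₁; in particular (U₀, U₁) is an isomorphism of matrix factorizations {a₁, b₁; a₂, b₂} ≅ {a₁ - λa₂,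 b₁; a₂, b₂ + λb₁}. -/
namespace Matrix

variable {R : Type*} [Ring R]

theorem unitriangular_mul_fin_two (lam a b c d : R) :
    !![1, -lam; 0, 1] * !![a, b; c, d] = !![a - lam * c, b - lam * d; c, d] := by
  rw [mul_fin_two]
  congr <;> noncomm_ring

theorem mul_unitriangular_fin_two (lam a b c d : R) :
    !![a, b; c, d] * !![1, -lam; 0, 1] = !![a, b - a * lam; c, d - c * lam] := by
  rw [mul_fin_two]
  congr <;> noncomm_ring

end Matrix

theorem koszul_row_operation (R : Type*) [CommRing R] (a₁ b₁ a₂ b₂ lam : R) :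
    let d₀ : Matrix (Fin 2) (Fin 2) R := !![a₁, b₂; a₂, -b₁]
    let d₁ : Matrix (Fin 2) (Fin 2) R := !![b₁, b₂; a₂, -a₁]
    let a₁' := a₁ - lam * a₂
    let b₁' := b₁
    let a₂' := a₂
    let b₂' := b₂ + lam * b₁
    let d₀' : Matrix (Fin 2) (Fin 2) R := !![a₁', b₂'; a₂', -b₁']
    let d₁' : Matrix (Fin 2) (Fin 2) R := !![b₁', b₂'; a₂', -a₁']
    let U₀ : Matrix (Fin 2) (Fin 2) R := 1
    let U₁ : Matrix (Fin 2) (Fin 2) R := !![1, -lam; 0, 1]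
    U₁ * d₀ = d₀' * U₀ ∧ U₀ * d₁ = d₁' * U₁ := by
  dsimp only
  rw [mul_one, one_mul, Matrix.unitriangular_mul_fin_two,
    Matrix.mul_unitriangular_fin_two]
  constructor <;> congr <;> ring
end
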